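/- Let R be a Dedekind domain and I a nonzero non-principal ideal of R such that I is isomorphic to I⁻¹ as R-modules. Let A = M₂(R) be the 2×2 matrix algebra. Then Hom_R(A, I), with its natural left A-module structure, is isomorphic to A as a left A-module. -/

import Mathlib

/-!
A nonzero ideal of a Dedekind domain is generated by two elements `a, b`, so `1 = a x + b y`
with `x, y ∈ I⁻¹`, and `(u, v) ↦ (u a + v b, v x - u y)` is an isomorphism `R² ≅ I ⊕ I⁻¹ ≅ I²`.
Whenever `F : Rⁿ ≅ Mⁿ`, the pairing `⟨m, z⟩ = ∑ₖ F((z m)ₖ)ₖ` identifies `Mₙ(R)` with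
`Hom_R(Mₙ(R), M)`: pairing with the matrix unit `Eₖⱼ` reads off `F(mⱼ)ₖ`, and
`⟨a x, z⟩ = ⟨x, z a⟩` by associativity.
-/

open scoped nonZeroDivisors

open FractionalIdeal IsLocalization

theorem IsDedekindDomain.exists_mul_add_mul_eq_one {R K : Type*} [CommRing R]
    [IsDedekindDomain R] [Field K] [Algebra R K] [IsFractionRing R K] {I : Ideal R} (hI : I ≠ ⊥) :
    ∃ a ∈ I, ∃ b ∈ I, ∃ x ∈ (I : FractionalIdeal R⁰ K)⁻¹, ∃ y ∈ (I : FractionalIdeal R⁰ K)⁻¹,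
      algebraMap R K a * x + algebraMap R K b * y = 1 := by
  obtain ⟨a, haI, ha⟩ := Submodule.exists_mem_ne_zero_of_ne_bot hI
  obtain ⟨b, hab⟩ := IsDedekindDomain.exists_eq_span_pair haI ha
  have hone : (1 : K) ∈ spanSingleton R⁰ (algebraMap R K a) * (I : FractionalIdeal R⁰ K)⁻¹ +
      spanSingleton R⁰ (algebraMap R K b) * (I : FractionalIdeal R⁰ K)⁻¹ := by
    rw [← add_mul, ← coeIdeal_span_singleton, ← coeIdeal_span_singleton, ← coeIdeal_sup,
      ← Ideal.span_insert, ← hab, mul_inv_cancel₀ (coeIdeal_ne_zero.mpr hI)]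
    exact one_mem_one _
  obtain ⟨_, hax, _, hby, hsum⟩ := (mem_add _ _ _).mp hone
  obtain ⟨x, hx, rfl⟩ := mem_singleton_mul.mp hax
  obtain ⟨y, hy, rfl⟩ := mem_singleton_mul.mp hby
  exact ⟨a, haI, b, (hab ▸ Ideal.subset_span (by simp)), x, hx, y, hy, hsum⟩

theorem exists_linearEquiv_prod_of_mul_add_mul_eq_one {R K : Type*} [CommRing R] [CommRing K]
    [Algebra R K] [FaithfulSMul R K] {I : Ideal R} {J : Submodule R K}
    (hIJ : coeSubmodule K I * J ≤ 1) {a b : R} (ha : a ∈ I) (hb : b ∈ I) {x y : K}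
    (hx : x ∈ J) (hy : y ∈ J) (h : algebraMap R K a * x + algebraMap R K b * y = 1) :
    Nonempty ((R × R) ≃ₗ[R] I × J) := by
  let f : R × R →ₗ[R] I × J :=
    ((LinearMap.fst R R R).smulRight (⟨a, ha⟩ : I) +
        (LinearMap.snd R R R).smulRight (⟨b, hb⟩ : I)).prod
      ((LinearMap.snd R R R).smulRight (⟨x, hx⟩ : J) -
        (LinearMap.fst R R R).smulRight (⟨y, hy⟩ : J))
  have hf₁ : ∀ u v, ((f (u, v)).1 : R) = u * a + v * b := fun _ _ => rfl
  have hf₂ : ∀ u v, ((f (u, v)).2 : K) = v • x - u • y := fun _ _ => rfl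
  have hinj : Function.Injective (algebraMap R K) := FaithfulSMul.algebraMap_injective R K
  have hR : ∀ i ∈ I, ∀ j ∈ J, ∃ r : R, algebraMap R K r = algebraMap R K i * j := fun i hi j hj =>
    Submodule.mem_one.mp (hIJ (Submodule.mul_mem_mul (Submodule.mem_map_of_mem hi) hj))
  refine ⟨LinearEquiv.ofBijective f ⟨?_, ?_⟩⟩
  · rw [injective_iff_map_eq_zero]
    rintro ⟨u, v⟩ huv
    have h₁ : algebraMap R K u * algebraMap R K a + algebraMap R K v * algebraMap R K b = 0 := by
      rw [← map_mul, ← map_mul, ← map_add, ← hf₁, huv, Prod.fst_zero, ZeroMemClass.coe_zero,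
        map_zero]
    have h₂ : algebraMap R K v * x - algebraMap R K u * y = 0 := by
      rw [← Algebra.smul_def, ← Algebra.smul_def, ← hf₂, huv, Prod.snd_zero, ZeroMemClass.coe_zero]
    have hu : algebraMap R K u = 0 := by
      linear_combination x * h₁ - algebraMap R K b * h₂ - algebraMap R K u * h
    have hv : algebraMap R K v = 0 := by
      linear_combination y * h₁ + algebraMap R K a * h₂ - algebraMap R K v * h
    rw [Prod.mk_eq_zero]
    exact ⟨(map_eq_zero_iff _ hinj).mp hu, (map_eq_zero_iff _ hinj).mp hv⟩
  · rintro ⟨⟨i, hi⟩, ⟨j, hj⟩⟩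
    obtain ⟨r₁, hr₁⟩ := hR i hi x hx
    obtain ⟨r₂, hr₂⟩ := hR b hb j hj
    obtain ⟨r₃, hr₃⟩ := hR i hi y hy
    obtain ⟨r₄, hr₄⟩ := hR a ha j hj
    refine ⟨(r₁ - r₂, r₃ + r₄), Prod.ext (Subtype.ext (hinj ?_)) (Subtype.ext ?_)⟩
    · rw [hf₁, map_add, map_mul, map_mul, map_sub, map_add]
      linear_combination algebraMap R K a * (hr₁ - hr₂) + algebraMap R K b * (hr₃ + hr₄) +
        algebraMap R K i * h
    · rw [hf₂, Algebra.smul_def, Algebra.smul_def, map_add, map_sub]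
      linear_combination x * (hr₃ + hr₄) - y * (hr₁ - hr₂) + j * h

namespace Matrix

variable {R M n : Type*} [CommRing R] [AddCommGroup M] [Module R M] [Fintype n]

def rowTrace (F : (n → R) →ₗ[R] (n → M)) : Matrix n n R →ₗ[R] M :=
  ∑ k, LinearMap.proj k ∘ₗ F ∘ₗ LinearMap.proj k

def rowPairing (F : (n → R) →ₗ[R] (n → M)) : Matrix n n R →ₗ[R] Matrix n n R →ₗ[R] M :=
  (LinearMap.mul R (Matrix n n R)).flip.compr₂ (rowTrace F)

theorem rowPairing_apply (F : (n → R) →ₗ[R] (n → M)) (m z : Matrix n n R) :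
    rowPairing F m z = ∑ k, F ((z * m) k) k := by
  simp only [rowPairing, rowTrace, LinearMap.compr₂_apply, LinearMap.flip_apply,
    LinearMap.mul_apply', LinearMap.sum_apply, LinearMap.comp_apply]
  rfl

theorem rowPairing_mul (F : (n → R) →ₗ[R] (n → M)) (a x z : Matrix n n R) :
    rowPairing F (a * x) z = rowPairing F x (z * a) := by
  simp only [rowPairing_apply, Matrix.mul_assoc]

variable [DecidableEq n]

theorem rowPairing_single (F : (n → R) →ₗ[R] (n → M)) (m : Matrix n n R) (k j : n) :
    rowPairing F m (single k j 1) = F (m j) k := by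
  have hrow : ∀ i, (single k j (1 : R) * m) i = if i = k then m j else 0 := by
    intro i
    ext l
    split_ifs with h
    · rw [h, single_mul_apply_same, one_mul]
    · exact single_mul_apply_of_ne _ _ _ _ _ h _
  rw [rowPairing_apply, Finset.sum_eq_single k (fun i _ hi => by simp [hrow, hi]) (by simp)]
  simp [hrow]

theorem rowPairing_bijective (F : (n → R) ≃ₗ[R] (n → M)) :
    Function.Bijective (rowPairing (F : (n → R) →ₗ[R] (n → M))) := by
  constructor
  · intro m m' h
    ext j l
    refine congrFun (F.injective (funext fun k => ?_)) l
    simpa only [LinearEquiv.coe_coe, rowPairing_single] using LinearMap.congr_fun h (single k j 1)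
  · intro f
    refine ⟨of fun j => F.symm fun k => f (single k j 1), (stdBasis R n n).ext fun ⟨k, j⟩ => ?_⟩
    rw [stdBasis_eq_single]
    exact (rowPairing_single _ _ k j).trans (congrFun (F.apply_symm_apply _) k)

theorem exists_linearEquiv_linearMap_of_pi_linearEquiv (F : (n → R) ≃ₗ[R] (n → M)) :
    ∃ Ψ : Matrix n n R ≃ₗ[R] (Matrix n n R →ₗ[R] M), ∀ a x z, Ψ (a * x) z = Ψ x (z * a) :=
  ⟨.ofBijective _ (rowPairing_bijective F), rowPairing_mul (F : (n → R) →ₗ[R] (n → M))⟩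

end Matrix

theorem matrix_hom_into_ideal_iso (R : Type*) [CommRing R] [IsDedekindDomain R]
    (I : Ideal R) (hI0 : I ≠ ⊥)
    (hinv : Nonempty (↥I ≃ₗ[R]
      ↥(((I : FractionalIdeal R⁰ (FractionRing R))⁻¹ : FractionalIdeal R⁰ (FractionRing R)) :
        Submodule R (FractionRing R)))) :
    ∃ Ψ : Matrix (Fin 2) (Fin 2) R ≃ₗ[R] (Matrix (Fin 2) (Fin 2) R →ₗ[R] ↥I),
      ∀ a x z : Matrix (Fin 2) (Fin 2) R, Ψ (a * x) z = Ψ x (z * a) := by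
  obtain ⟨φ⟩ := hinv
  obtain ⟨a, ha, b, hb, x, hx, y, hy, h⟩ :=
    IsDedekindDomain.exists_mul_add_mul_eq_one (K := FractionRing R) hI0
  have hII : coeSubmodule (FractionRing R) I *
      (((I : FractionalIdeal R⁰ (FractionRing R))⁻¹ : FractionalIdeal R⁰ (FractionRing R)) :
        Submodule R (FractionRing R)) ≤ 1 := by
    rw [← coe_coeIdeal, ← coe_mul, mul_inv_cancel₀ (coeIdeal_ne_zero.mpr hI0), coe_one]
  obtain ⟨e⟩ := exists_linearEquiv_prod_of_mul_add_mul_eq_one hII ha hb hx hy h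
  exact Matrix.exists_linearEquiv_linearMap_of_pi_linearEquiv <|
    (LinearEquiv.finTwoArrow R R).trans <| e.trans <|
      ((LinearEquiv.refl R I).prodCongr φ.symm).trans (LinearEquiv.finTwoArrow R I).symm
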